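/- arXiv:2211.13937 — 2 statements merged into one kernel-verified Lean document; each statement's English description precedes it below -/
import Mathlib

section
/- If ‖P^π - P̂^π‖_∞ < (1-γ)/γ, then the Varga operator S^π is a contraction with respect to the supremum norm with contraction factor γ' = (γ/(1-γ))‖P^π - P̂^π‖_∞ < 1, and hence the exact OS-VI iteration V_k = S^π V_{k-1} converges to V^π with ‖V^π - V_k‖_∞ ≤ γ'^k ‖V^π - V_0‖_∞. -/
/-! The Varga operator is affine with linear part `γ (1 - γ P̂)⁻¹ (P - P̂)`. In the
`ℓ^∞` operator norm `‖γ P̂‖ ≤ γ < 1`, and `(1 - ‖Q‖) ‖w‖ ≤ ‖(1 - Q) w‖` gives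
`‖(1 - γ P̂)⁻¹‖ ≤ 1 / (1 - γ)`, so the linear part has norm at most
`γ / (1 - γ) ‖P - P̂‖`. Since `V^π` solves `(1 - γ P̂) V = r + γ (P - P̂) V`, it is a fixed
point of `S^π`, and the geometric rate of the iteration follows. -/

open Matrix

noncomputable def vnorm {d : ℕ} (v : Fin d → ℝ) : ℝ := ⨆ i, |v i|

noncomputable def mnorm {d : ℕ} (M : Matrix (Fin d) (Fin d) ℝ) : ℝ :=
  ⨆ i, ∑ j, |M i j|

def RowStochastic {d : ℕ} (P : Matrix (Fin d) (Fin d) ℝ) : Prop :=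
  (∀ i j, 0 ≤ P i j) ∧ ∀ i, ∑ j, P i j = 1

/-- The Varga operator `S^π V = (I - γ P̂)⁻¹ (r + γ (P - P̂) V)`. -/
noncomputable def varga {d : ℕ} (γ : ℝ) (P Phat : Matrix (Fin d) (Fin d) ℝ)
    (r V : Fin d → ℝ) : Fin d → ℝ :=
  ((1 - γ • Phat)⁻¹).mulVec (r + γ • ((P - Phat).mulVec V))

/-- The value function `V^π = (I - γ P)⁻¹ r`. -/
noncomputable def valueFn {d : ℕ} (γ : ℝ) (P : Matrix (Fin d) (Fin d) ℝ)
    (r : Fin d → ℝ) : Fin d → ℝ :=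
  ((1 - γ • P)⁻¹).mulVec r

open Function

attribute [local instance] Matrix.linftyOpNormedAddCommGroup Matrix.linftyOpNormedSpace

lemma vnorm_eq_norm {d : ℕ} (v : Fin d → ℝ) : vnorm v = ‖v‖ := by
  rw [vnorm, Pi.norm_def, Finset.sup_univ_eq_ciSup, NNReal.coe_iSup]
  rfl

lemma mnorm_eq_norm {d : ℕ} (M : Matrix (Fin d) (Fin d) ℝ) : mnorm M = ‖M‖ := by
  rw [mnorm, linfty_opNorm_def, Finset.sup_univ_eq_ciSup, NNReal.coe_iSup]
  simp [NNReal.coe_sum]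

lemma RowStochastic.norm_le_one {d : ℕ} {P : Matrix (Fin d) (Fin d) ℝ}
    (hP : RowStochastic P) : ‖P‖ ≤ 1 := by
  rw [← mnorm_eq_norm]
  refine Real.iSup_le (fun i => ?_) zero_le_one
  simp only [abs_of_nonneg (hP.1 i _), hP.2 i, le_refl]

lemma RowStochastic.norm_smul_le {d : ℕ} {P : Matrix (Fin d) (Fin d) ℝ}
    (hP : RowStochastic P) {γ : ℝ} (hγ : 0 ≤ γ) : ‖γ • P‖ ≤ γ := by
  rw [norm_smul, Real.norm_of_nonneg hγ]
  exact mul_le_of_le_one_right hγ hP.norm_le_one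

section OneSub

variable {n 𝕜 : Type*} [Fintype n] [DecidableEq n] [NormedField 𝕜]

lemma one_sub_norm_mul_norm_le (Q : Matrix n n 𝕜) (w : n → 𝕜) :
    (1 - ‖Q‖) * ‖w‖ ≤ ‖(1 - Q) *ᵥ w‖ := by
  rw [sub_mulVec, one_mulVec]
  have := norm_le_norm_sub_add w (Q *ᵥ w)
  have := linfty_opNorm_mulVec Q w
  linarith

lemma isUnit_det_one_sub_of_norm_lt_one {Q : Matrix n n 𝕜} (hQ : ‖Q‖ < 1) :
    IsUnit (1 - Q).det := by
  rw [isUnit_iff_ne_zero, Ne, ← exists_mulVec_eq_zero_iff]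
  rintro ⟨w, hw0, hw⟩
  have := one_sub_norm_mul_norm_le Q w
  rw [hw, norm_zero] at this
  exact hw0 (norm_le_zero_iff.mp (nonpos_of_mul_nonpos_right this (by linarith)))

lemma norm_inv_one_sub_mulVec_le {Q : Matrix n n 𝕜} {c : ℝ} (hQ : ‖Q‖ ≤ c) (hc : c < 1)
    (x : n → 𝕜) : ‖(1 - Q)⁻¹ *ᵥ x‖ ≤ ‖x‖ / (1 - c) := by
  have hx : (1 - Q) *ᵥ ((1 - Q)⁻¹ *ᵥ x) = x := by
    rw [mulVec_mulVec, mul_nonsing_inv _ (isUnit_det_one_sub_of_norm_lt_one (hQ.trans_lt hc)),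
      one_mulVec]
  rw [le_div_iff₀ (by linarith), mul_comm]
  calc (1 - c) * ‖(1 - Q)⁻¹ *ᵥ x‖ ≤ (1 - ‖Q‖) * ‖(1 - Q)⁻¹ *ᵥ x‖ := by gcongr
    _ ≤ ‖(1 - Q) *ᵥ ((1 - Q)⁻¹ *ᵥ x)‖ := one_sub_norm_mul_norm_le Q _
    _ = ‖x‖ := by rw [hx]

end OneSub

lemma RowStochastic.isUnit_det_one_sub_smul {d : ℕ} {P : Matrix (Fin d) (Fin d) ℝ}
    (hP : RowStochastic P) {γ : ℝ} (hγ0 : 0 ≤ γ) (hγ1 : γ < 1) : IsUnit (1 - γ • P).det :=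
  isUnit_det_one_sub_of_norm_lt_one ((hP.norm_smul_le hγ0).trans_lt hγ1)

lemma dist_le_pow_mul_of_isFixedPt {X : Type*} [PseudoMetricSpace X] {f : X → X} {q : ℝ}
    (hq : 0 ≤ q) (hf : ∀ x y, dist (f x) (f y) ≤ q * dist x y) {x : X} (hx : IsFixedPt f x)
    {u : ℕ → X} (hu : ∀ k, u (k + 1) = f (u k)) (k : ℕ) :
    dist x (u k) ≤ q ^ k * dist x (u 0) := by
  induction k with
  | zero => simp
  | succ k ih =>
    calc dist x (u (k + 1)) = dist (f x) (f (u k)) := by rw [hx.eq, hu]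
      _ ≤ q * dist x (u k) := hf _ _
      _ ≤ q * (q ^ k * dist x (u 0)) := by gcongr
      _ = q ^ (k + 1) * dist x (u 0) := by ring

section Varga

variable {d : ℕ} {γ : ℝ} {P Phat : Matrix (Fin d) (Fin d) ℝ} {r : Fin d → ℝ}

lemma varga_sub_varga (V₁ V₂ : Fin d → ℝ) :
    varga γ P Phat r V₁ - varga γ P Phat r V₂ =
      (1 - γ • Phat)⁻¹ *ᵥ ((γ • (P - Phat)) *ᵥ (V₁ - V₂)) := by
  rw [varga, varga, ← mulVec_sub, add_sub_add_left_eq_sub, ← smul_sub, ← mulVec_sub,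
    smul_mulVec]

lemma norm_varga_sub_varga_le (hγ0 : 0 ≤ γ) (hγ1 : γ < 1) (hPhat : RowStochastic Phat)
    (V₁ V₂ : Fin d → ℝ) :
    ‖varga γ P Phat r V₁ - varga γ P Phat r V₂‖ ≤
      γ / (1 - γ) * ‖P - Phat‖ * ‖V₁ - V₂‖ := by
  rw [varga_sub_varga]
  calc _ ≤ ‖(γ • (P - Phat)) *ᵥ (V₁ - V₂)‖ / (1 - γ) :=
        norm_inv_one_sub_mulVec_le (hPhat.norm_smul_le hγ0) hγ1 _
    _ ≤ γ * ‖P - Phat‖ * ‖V₁ - V₂‖ / (1 - γ) := by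
        gcongr
        refine (linfty_opNorm_mulVec _ _).trans ?_
        rw [norm_smul, Real.norm_of_nonneg hγ0]
    _ = γ / (1 - γ) * ‖P - Phat‖ * ‖V₁ - V₂‖ := by ring

lemma isFixedPt_varga_valueFn (hP : IsUnit (1 - γ • P).det)
    (hPhat : IsUnit (1 - γ • Phat).det) :
    IsFixedPt (varga γ P Phat r) (valueFn γ P r) := by
  have hV : (1 - γ • P) *ᵥ valueFn γ P r = r := by
    rw [valueFn, mulVec_mulVec, mul_nonsing_inv _ hP, one_mulVec]
  have hsplit : 1 - γ • Phat = (1 - γ • P) + γ • (P - Phat) := by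
    rw [smul_sub]; abel
  have harg : r + γ • (P - Phat) *ᵥ valueFn γ P r = (1 - γ • Phat) *ᵥ valueFn γ P r := by
    rw [hsplit, add_mulVec, hV, smul_mulVec]
  rw [IsFixedPt, varga, harg, mulVec_mulVec, nonsing_inv_mul _ hPhat, one_mulVec]

end Varga

/-- If `‖P - P̂‖_∞ < (1-γ)/γ` (equivalently `γ‖P - P̂‖_∞ < 1 - γ`), then `S^π` is a
`γ'`-contraction in sup norm with `γ' = (γ/(1-γ))‖P - P̂‖_∞ < 1`, and exact OS-VI
converges to `V^π` at rate `γ'^k`. -/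
theorem osvi_pe_contraction {d : ℕ} (γ : ℝ) (hγ0 : 0 ≤ γ) (hγ1 : γ < 1)
    (P Phat : Matrix (Fin d) (Fin d) ℝ)
    (hP : RowStochastic P) (hPhat : RowStochastic Phat)
    (r : Fin d → ℝ)
    (herr : γ * mnorm (P - Phat) < 1 - γ) :
    γ / (1 - γ) * mnorm (P - Phat) < 1 ∧
    (∀ V₁ V₂ : Fin d → ℝ,
      vnorm (varga γ P Phat r V₁ - varga γ P Phat r V₂) ≤
        (γ / (1 - γ) * mnorm (P - Phat)) * vnorm (V₁ - V₂)) ∧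
    ∀ V : ℕ → Fin d → ℝ, (∀ k, V (k + 1) = varga γ P Phat r (V k)) →
      ∀ k, vnorm (valueFn γ P r - V k) ≤
        (γ / (1 - γ) * mnorm (P - Phat)) ^ k * vnorm (valueFn γ P r - V 0) := by
  simp only [vnorm_eq_norm, mnorm_eq_norm] at herr ⊢
  have h1γ : 0 < 1 - γ := by linarith
  have hcontr : ∀ V₁ V₂ : Fin d → ℝ, ‖varga γ P Phat r V₁ - varga γ P Phat r V₂‖ ≤
      γ / (1 - γ) * ‖P - Phat‖ * ‖V₁ - V₂‖ :=
    norm_varga_sub_varga_le hγ0 hγ1 hPhat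
  refine ⟨?_, hcontr, fun V hV k => ?_⟩
  · rwa [div_mul_eq_mul_div, div_lt_one h1γ]
  · have hfix : IsFixedPt (varga γ P Phat r) (valueFn γ P r) :=
      isFixedPt_varga_valueFn (hP.isUnit_det_one_sub_smul hγ0 hγ1)
        (hPhat.isUnit_det_one_sub_smul hγ0 hγ1)
    simp only [← dist_eq_norm] at hcontr ⊢
    exact dist_le_pow_mul_of_isFixedPt (by positivity) hcontr hfix hV k
end

section
/- (Weighted L_4 bound on G^π) For any function v: X → ℝ, ‖G^π v‖_{4,ρ} ≤ (γ/(1-γ)) √(Ĉ^π(ρ) · χ²_ρ(P^π ‖ P̂^π)) · ‖v‖_{4,ρ}, where G^π = (I - γ P̂^π)^{-1} γ (P^π - P̂^π). -/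
open Matrix

/-- The discounted future-state distribution
`η̂^π(y|x) = (1-γ) ∑_{t≥0} γ^t (P̂^π)^t(y|x)`. -/
noncomputable def eta {d : ℕ} (γ : ℝ) (Phat : Matrix (Fin d) (Fin d) ℝ)
    (x y : Fin d) : ℝ :=
  (1 - γ) * ∑' t : ℕ, γ ^ t * (Phat ^ t) x y

/-- The weighted `L₄(ρ)` norm: `‖f‖_{4,ρ} = (∑_x ρ(x) f(x)⁴)^{1/4}`. -/
noncomputable def norm4 {d : ℕ} (ρ : Fin d → ℝ) (f : Fin d → ℝ) : ℝ :=
  (∑ x, ρ x * f x ^ 4) ^ ((1 : ℝ) / 4)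

/-- The squared concentrability coefficient
`Ĉ^π(ρ)² = (1/γ²) ∑_x ρ(x) (max_y η̂^π(y|x)/ρ(y))³`. -/
noncomputable def Csq {d : ℕ} (γ : ℝ) (Phat : Matrix (Fin d) (Fin d) ℝ)
    (ρ : Fin d → ℝ) : ℝ :=
  1 / γ ^ 2 * ∑ x, ρ x * (⨆ y, eta γ Phat x y / ρ y) ^ 3

/-- The weighted chi-squared divergence
`χ²_ρ(P^π ‖ P̂^π) = ∑_x ρ(x) ∑_y (P̂(y|x) - P(y|x))²/P̂(y|x)`. -/
noncomputable def chiSq {d : ℕ} (ρ : Fin d → ℝ)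
    (P Phat : Matrix (Fin d) (Fin d) ℝ) : ℝ :=
  ∑ x, ρ x * ∑ y, (Phat x y - P x y) ^ 2 / Phat x y

/-!
Write `M = (1 - γP̂)⁻¹ = ∑ γᵗ P̂ᵗ`: a nonnegative matrix with row sums `1/(1-γ)`, with
`γ M P̂ = M - 1 ≤ M`, and with `M x y ≤ R x ρ y / (1-γ)` where `R x = max_y η̂(y|x)/ρ(y)`.
Cauchy–Schwarz three times: along a row of `P - P̂`,
`((P - P̂) v) z ² ≤ χ z · (P̂ v²) z` with `χ z = ∑_y (P̂ z y - P z y)² / P̂ z y`; against the weights `M x ·`,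
`(M (P - P̂) v) x ² ≤ (M χ) x · (M P̂ v²) x ≤ (M χ) x · (M v²) x / γ`; and
`(M v²) x ² ≤ (M v⁴) x / (1-γ)`. Bounding `M χ` and `M v⁴` through `R x` gives
`(G v) x ⁴ ≤ γ² R(x)³ χ²_ρ ‖v‖⁴ / (1-γ)⁴`, and averaging over `ρ` turns `∑ ρ R³` into `γ² Ĉ²`.
-/

section CauchySchwarz

variable {m n : Type*} [Fintype n]

lemma sq_mulVec_le_mulVec_mul_mulVec {K : Matrix m n ℝ} (hK : ∀ i j, 0 ≤ K i j)
    {w a b : n → ℝ} (ha : ∀ j, 0 ≤ a j) (hb : ∀ j, 0 ≤ b j) (hw : ∀ j, w j ^ 2 ≤ a j * b j)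
    (i : m) : (K *ᵥ w) i ^ 2 ≤ (K *ᵥ a) i * (K *ᵥ b) i :=
  Finset.sum_sq_le_sum_mul_sum_of_sq_le_mul _ (fun j _ => mul_nonneg (hK i j) (ha j))
    (fun j _ => mul_nonneg (hK i j) (hb j)) fun j _ =>
      calc (K i j * w j) ^ 2 = K i j ^ 2 * w j ^ 2 := by ring
        _ ≤ K i j ^ 2 * (a j * b j) := mul_le_mul_of_nonneg_left (hw j) (sq_nonneg _)
        _ = K i j * a j * (K i j * b j) := by ring

lemma sq_sub_mulVec_le {P Q : Matrix m n ℝ} (hQ : ∀ i j, 0 ≤ Q i j)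
    (habs : ∀ i j, Q i j ≠ P i j → 0 < Q i j) (v : n → ℝ) (i : m) :
    ((P - Q) *ᵥ v) i ^ 2 ≤
      (∑ j, (Q i j - P i j) ^ 2 / Q i j) * (Q *ᵥ fun j => v j ^ 2) i := by
  refine Finset.sum_sq_le_sum_mul_sum_of_sq_le_mul _
    (fun j _ => div_nonneg (sq_nonneg _) (hQ i j))
    (fun j _ => mul_nonneg (hQ i j) (sq_nonneg _)) fun j _ => ?_
  show ((P i j - Q i j) * v j) ^ 2 ≤ (Q i j - P i j) ^ 2 / Q i j * (Q i j * v j ^ 2)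
  -- where `Q i j = 0`, `habs` forces `P i j = 0`, so both sides vanish (with `x / 0 = 0`)
  by_cases hPQ : Q i j = P i j
  · simp [hPQ]
  · have hQ0 : Q i j ≠ 0 := (habs i j hPQ).ne'
    apply le_of_eq
    field_simp
    ring

lemma mulVec_apply_nonneg {K : Matrix m n ℝ} {f : n → ℝ} {i : m} (hK : ∀ j, 0 ≤ K i j)
    (hf : ∀ j, 0 ≤ f j) : 0 ≤ (K *ᵥ f) i :=
  Finset.sum_nonneg fun j _ => mul_nonneg (hK j) (hf j)

lemma mulVec_apply_le_mul_sum {K : Matrix m n ℝ} {ρ f : n → ℝ} {c : ℝ} {i : m}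
    (hK : ∀ j, K i j ≤ c * ρ j) (hf : ∀ j, 0 ≤ f j) :
    (K *ᵥ f) i ≤ c * ∑ j, ρ j * f j := by
  rw [Finset.mul_sum]
  exact Finset.sum_le_sum fun j _ => by
    rw [← mul_assoc]; exact mul_le_mul_of_nonneg_right (hK j) (hf j)

end CauchySchwarz

section Resolvent

variable {n : Type*} [Fintype n] [DecidableEq n] {γ : ℝ} {P : Matrix n n ℝ}

lemma summable_smul_pow (hγ0 : 0 ≤ γ) (hγ1 : γ < 1) (hP : P ∈ rowStochastic ℝ n) :
    Summable fun t : ℕ => (γ • P) ^ t := by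
  refine Pi.summable.mpr fun i => Pi.summable.mpr fun j => ?_
  simp only [smul_pow, Matrix.smul_apply, smul_eq_mul]
  exact (summable_geometric_of_lt_one hγ0 hγ1).of_nonneg_of_le
    (fun t => mul_nonneg (pow_nonneg hγ0 t) (nonneg_of_mem_rowStochastic (pow_mem hP t)))
    (fun t => mul_le_of_le_one_right (pow_nonneg hγ0 t)
      (le_one_of_mem_rowStochastic (pow_mem hP t)))

lemma inv_one_sub_smul_apply_eq_tsum (hγ0 : 0 ≤ γ) (hγ1 : γ < 1) (hP : P ∈ rowStochastic ℝ n)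
    (i j : n) : (1 - γ • P)⁻¹ i j = ∑' t : ℕ, γ ^ t * (P ^ t) i j := by
  have hs := summable_smul_pow hγ0 hγ1 hP
  have hrow : (∑' t : ℕ, (γ • P) ^ t) i = ∑' t : ℕ, ((γ • P) ^ t) i := tsum_apply hs
  rw [inv_eq_right_inv hs.one_sub_mul_tsum_pow, hrow, tsum_apply (Pi.summable.mp hs i)]
  simp only [smul_pow, Matrix.smul_apply, smul_eq_mul]

lemma inv_one_sub_smul_nonneg (hγ0 : 0 ≤ γ) (hγ1 : γ < 1) (hP : P ∈ rowStochastic ℝ n)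
    (i j : n) : 0 ≤ (1 - γ • P)⁻¹ i j := by
  rw [inv_one_sub_smul_apply_eq_tsum hγ0 hγ1 hP]
  exact tsum_nonneg fun t =>
    mul_nonneg (pow_nonneg hγ0 t) (nonneg_of_mem_rowStochastic (pow_mem hP t))

lemma inv_one_sub_smul_mul_one_sub (hγ0 : 0 ≤ γ) (hγ1 : γ < 1) (hP : P ∈ rowStochastic ℝ n) :
    (1 - γ • P)⁻¹ * (1 - γ • P) = 1 := by
  have hs := summable_smul_pow hγ0 hγ1 hP
  rw [inv_eq_right_inv hs.one_sub_mul_tsum_pow, hs.tsum_pow_mul_one_sub]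

lemma sum_inv_one_sub_smul_apply (hγ0 : 0 ≤ γ) (hγ1 : γ < 1) (hP : P ∈ rowStochastic ℝ n)
    (i : n) : ∑ j, (1 - γ • P)⁻¹ i j = (1 - γ)⁻¹ := by
  have h := congrArg (fun A => (A *ᵥ 1) i) (inv_one_sub_smul_mul_one_sub hγ0 hγ1 hP)
  simp only [← mulVec_mulVec, sub_mulVec, smul_mulVec, one_mulVec,
    one_vecMul_of_mem_rowStochastic hP] at h
  simp only [mulVec, dotProduct, Pi.sub_apply, Pi.smul_apply, Pi.one_apply, smul_eq_mul, mul_one,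
    ← Finset.sum_mul] at h
  exact eq_inv_of_mul_eq_one_left h

lemma smul_inv_one_sub_smul_mul_apply_le (hγ0 : 0 ≤ γ) (hγ1 : γ < 1)
    (hP : P ∈ rowStochastic ℝ n) (i j : n) :
    γ * ((1 - γ • P)⁻¹ * P) i j ≤ (1 - γ • P)⁻¹ i j := by
  have h := congrFun (congrFun (inv_one_sub_smul_mul_one_sub hγ0 hγ1 hP) i) j
  rw [mul_sub, mul_one, Matrix.mul_smul, Matrix.sub_apply, Matrix.smul_apply, smul_eq_mul] at h
  have : (0 : ℝ) ≤ (1 : Matrix n n ℝ) i j := by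
    rw [one_apply]; split_ifs <;> norm_num
  linarith

lemma sq_inv_one_sub_smul_mulVec_le (hγ0 : 0 ≤ γ) (hγ1 : γ < 1) (hP : P ∈ rowStochastic ℝ n)
    (u : n → ℝ) (i : n) :
    ((1 - γ • P)⁻¹ *ᵥ u) i ^ 2 ≤ (1 - γ)⁻¹ * ((1 - γ • P)⁻¹ *ᵥ fun j => u j ^ 2) i := by
  have h := sq_mulVec_le_mulVec_mul_mulVec (inv_one_sub_smul_nonneg hγ0 hγ1 hP)
    (a := 1) (fun _ => zero_le_one) (fun j => sq_nonneg (u j)) (fun j => (one_mul _).ge) i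
  have hrow : ((1 - γ • P)⁻¹ *ᵥ 1) i = (1 - γ)⁻¹ := by
    simp only [mulVec, dotProduct, Pi.one_apply, mul_one]
    exact sum_inv_one_sub_smul_apply hγ0 hγ1 hP i
  rwa [hrow] at h

lemma smul_inv_one_sub_smul_mulVec_mulVec_le (hγ0 : 0 ≤ γ) (hγ1 : γ < 1)
    (hP : P ∈ rowStochastic ℝ n) {f : n → ℝ} (hf : ∀ j, 0 ≤ f j) (i : n) :
    γ * ((1 - γ • P)⁻¹ *ᵥ (P *ᵥ f)) i ≤ ((1 - γ • P)⁻¹ *ᵥ f) i := by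
  rw [mulVec_mulVec]
  simp only [mulVec, dotProduct, Finset.mul_sum, ← mul_assoc]
  exact Finset.sum_le_sum fun j _ =>
    mul_le_mul_of_nonneg_right (smul_inv_one_sub_smul_mul_apply_le hγ0 hγ1 hP i j) (hf j)

end Resolvent

lemma RowStochastic.mem_rowStochastic {d : ℕ} {P : Matrix (Fin d) (Fin d) ℝ}
    (hP : RowStochastic P) : P ∈ rowStochastic ℝ (Fin d) :=
  mem_rowStochastic_iff_sum.mpr hP

section Concentrability

variable {d : ℕ} {γ : ℝ} {Phat : Matrix (Fin d) (Fin d) ℝ} {ρ : Fin d → ℝ}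

lemma eta_eq_mul_inv_one_sub_smul (hγ0 : 0 ≤ γ) (hγ1 : γ < 1) (hPhat : RowStochastic Phat)
    (x y : Fin d) : eta γ Phat x y = (1 - γ) * (1 - γ • Phat)⁻¹ x y := by
  rw [eta, inv_one_sub_smul_apply_eq_tsum hγ0 hγ1 hPhat.mem_rowStochastic]

lemma inv_one_sub_smul_apply_le (hγ0 : 0 ≤ γ) (hγ1 : γ < 1) (hPhat : RowStochastic Phat)
    (hρ : ∀ y, 0 < ρ y) (x y : Fin d) :
    (1 - γ • Phat)⁻¹ x y ≤ (⨆ y', eta γ Phat x y' / ρ y') / (1 - γ) * ρ y := by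
  have hle : eta γ Phat x y / ρ y ≤ ⨆ y', eta γ Phat x y' / ρ y' :=
    le_ciSup (f := fun y' => eta γ Phat x y' / ρ y') (Finite.bddAbove_range _) y
  rw [eta_eq_mul_inv_one_sub_smul hγ0 hγ1 hPhat, div_le_iff₀ (hρ y)] at hle
  rw [div_mul_eq_mul_div, le_div_iff₀ (sub_pos.mpr hγ1)]
  linarith

lemma iSup_eta_div_nonneg (hγ0 : 0 ≤ γ) (hγ1 : γ < 1) (hPhat : RowStochastic Phat)
    (hρ : ∀ y, 0 < ρ y) (x : Fin d) : 0 ≤ ⨆ y, eta γ Phat x y / ρ y := by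
  refine le_trans ?_ (le_ciSup (f := fun y => eta γ Phat x y / ρ y) (Finite.bddAbove_range _) x)
  rw [eta_eq_mul_inv_one_sub_smul hγ0 hγ1 hPhat]
  exact div_nonneg (mul_nonneg (sub_pos.mpr hγ1).le
    (inv_one_sub_smul_nonneg hγ0 hγ1 hPhat.mem_rowStochastic x x)) (hρ x).le

end Concentrability

lemma chiSq_nonneg {d : ℕ} {ρ : Fin d → ℝ} (hρ : ∀ x, 0 ≤ ρ x) {P Phat : Matrix (Fin d) (Fin d) ℝ}
    (hPhat : ∀ x y, 0 ≤ Phat x y) : 0 ≤ chiSq ρ P Phat :=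
  Finset.sum_nonneg fun x _ => mul_nonneg (hρ x)
    (Finset.sum_nonneg fun y _ => div_nonneg (sq_nonneg _) (hPhat x y))

lemma norm4_le_mul_of_sum_le {d : ℕ} {ρ f g : Fin d → ℝ} {c : ℝ} (hρ : ∀ x, 0 ≤ ρ x)
    (hc : 0 ≤ c) (h : ∑ x, ρ x * f x ^ 4 ≤ c ^ 4 * ∑ x, ρ x * g x ^ 4) :
    norm4 ρ f ≤ c * norm4 ρ g := by
  have hf : 0 ≤ ∑ x, ρ x * f x ^ 4 := Finset.sum_nonneg fun x _ => mul_nonneg (hρ x) (by positivity)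
  have hg : 0 ≤ ∑ x, ρ x * g x ^ 4 := Finset.sum_nonneg fun x _ => mul_nonneg (hρ x) (by positivity)
  have hc4 : (c ^ 4) ^ ((1 : ℝ) / 4) = c := by
    rw [one_div, show (4 : ℝ) = (4 : ℕ) by norm_num]
    exact Real.pow_rpow_inv_natCast hc (by norm_num)
  calc norm4 ρ f ≤ (c ^ 4 * ∑ x, ρ x * g x ^ 4) ^ ((1 : ℝ) / 4) :=
        Real.rpow_le_rpow hf h (by norm_num)
    _ = c * norm4 ρ g := by rw [Real.mul_rpow (by positivity) hg, hc4, norm4]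

lemma pow_four_smul_inv_one_sub_smul_mulVec_le {d : ℕ} {γ : ℝ} (hγ0 : 0 < γ) (hγ1 : γ < 1)
    {P Phat : Matrix (Fin d) (Fin d) ℝ} (hPhat : RowStochastic Phat)
    (habs : ∀ x y, Phat x y ≠ P x y → 0 < Phat x y) {ρ : Fin d → ℝ} {c : ℝ} {x : Fin d}
    (hc : ∀ y, (1 - γ • Phat)⁻¹ x y ≤ c * ρ y) (v : Fin d → ℝ) :
    (γ * ((1 - γ • Phat)⁻¹ *ᵥ ((P - Phat) *ᵥ v)) x) ^ 4 ≤
      γ ^ 2 * c ^ 3 * (1 - γ)⁻¹ * chiSq ρ P Phat ^ 2 * ∑ y, ρ y * v y ^ 4 := by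
  set M := (1 - γ • Phat)⁻¹
  have hPhat' := hPhat.mem_rowStochastic
  have hM : ∀ i j, 0 ≤ M i j := inv_one_sub_smul_nonneg hγ0.le hγ1 hPhat'
  set χ : Fin d → ℝ := fun z => ∑ y, (Phat z y - P z y) ^ 2 / Phat z y
  set S : Fin d → ℝ := Phat *ᵥ fun y => v y ^ 2
  have hχ : ∀ z, 0 ≤ χ z := fun z =>
    Finset.sum_nonneg fun y _ => div_nonneg (sq_nonneg _) (hPhat.1 z y)
  have hS : ∀ z, 0 ≤ S z := fun z => mulVec_apply_nonneg (hPhat.1 z) fun y => sq_nonneg _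
  have hMχ : 0 ≤ (M *ᵥ χ) x := mulVec_apply_nonneg (hM x) hχ
  have hMS : 0 ≤ γ * (M *ᵥ S) x := mul_nonneg hγ0.le (mulVec_apply_nonneg (hM x) hS)
  have hw : (M *ᵥ ((P - Phat) *ᵥ v)) x ^ 2 ≤ (M *ᵥ χ) x * (M *ᵥ S) x :=
    sq_mulVec_le_mulVec_mul_mulVec hM hχ hS (sq_sub_mulVec_le hPhat.1 habs v) x
  have hγS : γ * (M *ᵥ S) x ≤ (M *ᵥ fun y => v y ^ 2) x :=
    smul_inv_one_sub_smul_mulVec_mulVec_le hγ0.le hγ1 hPhat' (fun y => sq_nonneg _) x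
  have hV : (M *ᵥ fun y => v y ^ 2) x ^ 2 ≤ (1 - γ)⁻¹ * (M *ᵥ fun y => v y ^ 4) x := by
    rw [show (fun y => v y ^ 4) = fun y => (v y ^ 2) ^ 2 from funext fun y => by ring]
    exact sq_inv_one_sub_smul_mulVec_le hγ0.le hγ1 hPhat' (fun y => v y ^ 2) x
  have hA : (M *ᵥ χ) x ≤ c * chiSq ρ P Phat := mulVec_apply_le_mul_sum hc hχ
  have hF : (M *ᵥ fun y => v y ^ 4) x ≤ c * ∑ y, ρ y * v y ^ 4 :=
    mulVec_apply_le_mul_sum hc fun y => by positivity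
  calc (γ * (M *ᵥ ((P - Phat) *ᵥ v)) x) ^ 4
      = γ ^ 2 * ((M *ᵥ ((P - Phat) *ᵥ v)) x ^ 2) ^ 2 * γ ^ 2 := by ring
    _ ≤ γ ^ 2 * ((M *ᵥ χ) x * (M *ᵥ S) x) ^ 2 * γ ^ 2 := by gcongr
    _ = γ ^ 2 * (M *ᵥ χ) x ^ 2 * (γ * (M *ᵥ S) x) ^ 2 := by ring
    _ ≤ γ ^ 2 * (c * chiSq ρ P Phat) ^ 2 * (M *ᵥ fun y => v y ^ 2) x ^ 2 := by gcongr
    _ ≤ γ ^ 2 * (c * chiSq ρ P Phat) ^ 2 * ((1 - γ)⁻¹ * (c * ∑ y, ρ y * v y ^ 4)) := by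
        gcongr; exact hV.trans (by gcongr)
    _ = γ ^ 2 * c ^ 3 * (1 - γ)⁻¹ * chiSq ρ P Phat ^ 2 * ∑ y, ρ y * v y ^ 4 := by ring

theorem G_L4_bound_general {d : ℕ} (γ : ℝ) (hγ0 : 0 < γ) (hγ1 : γ < 1)
    (P Phat : Matrix (Fin d) (Fin d) ℝ)
    (hPhat : RowStochastic Phat)
    (ρ : Fin d → ℝ) (hρpos : ∀ x, 0 < ρ x)
    (habs : ∀ x y, Phat x y ≠ P x y → 0 < Phat x y)
    (v : Fin d → ℝ) :
    norm4 ρ (((1 - γ • Phat)⁻¹ * (γ • (P - Phat))).mulVec v) ≤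
      γ / (1 - γ) * Real.sqrt (Real.sqrt (Csq γ Phat ρ) * chiSq ρ P Phat) *
        norm4 ρ v := by
  set R : Fin d → ℝ := fun x => ⨆ y, eta γ Phat x y / ρ y
  have hR : ∀ x, 0 ≤ R x := iSup_eta_div_nonneg hγ0.le hγ1 hPhat hρpos
  have hCsq : Csq γ Phat ρ = 1 / γ ^ 2 * ∑ x, ρ x * R x ^ 3 := rfl
  have hCsq0 : 0 ≤ Csq γ Phat ρ := by
    rw [hCsq]
    exact mul_nonneg (by positivity)
      (Finset.sum_nonneg fun x _ => mul_nonneg (hρpos x).le (pow_nonneg (hR x) 3))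
  have hχ0 : 0 ≤ chiSq ρ P Phat := chiSq_nonneg (fun x => (hρpos x).le) hPhat.1
  have hsqrt : Real.sqrt (Real.sqrt (Csq γ Phat ρ) * chiSq ρ P Phat) ^ 4
      = Csq γ Phat ρ * chiSq ρ P Phat ^ 2 := by
    rw [show 4 = 2 * 2 from rfl, pow_mul, Real.sq_sqrt (by positivity), mul_pow,
      Real.sq_sqrt hCsq0]
  rw [Matrix.mul_smul, smul_mulVec, ← mulVec_mulVec]
  refine norm4_le_mul_of_sum_le (fun x => (hρpos x).le) (by positivity) ?_
  calc ∑ x, ρ x * (γ • (1 - γ • Phat)⁻¹ *ᵥ (P - Phat) *ᵥ v) x ^ 4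
      ≤ ∑ x, ρ x * (γ ^ 2 * (R x / (1 - γ)) ^ 3 * (1 - γ)⁻¹ * chiSq ρ P Phat ^ 2 *
          ∑ y, ρ y * v y ^ 4) :=
        Finset.sum_le_sum fun x _ => mul_le_mul_of_nonneg_left
          (pow_four_smul_inv_one_sub_smul_mulVec_le hγ0 hγ1 hPhat habs
            (inv_one_sub_smul_apply_le hγ0.le hγ1 hPhat hρpos x) v) (hρpos x).le
    _ = (γ / (1 - γ) * Real.sqrt (Real.sqrt (Csq γ Phat ρ) * chiSq ρ P Phat)) ^ 4 *
          ∑ y, ρ y * v y ^ 4 := by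
        rw [mul_pow, hsqrt, hCsq]
        generalize ∑ y, ρ y * v y ^ 4 = N
        simp only [Finset.mul_sum, Finset.sum_mul]
        refine Finset.sum_congr rfl fun x _ => ?_
        field_simp

/-- Weighted `L₄(ρ)` bound on `G^π = (I - γP̂)⁻¹ γ(P - P̂)` (Lemma 8):
`‖G^π v‖_{4,ρ} ≤ (γ/(1-γ)) √(Ĉ^π(ρ) χ²_ρ(P‖P̂)) ‖v‖_{4,ρ}`. -/
theorem G_L4_bound {d : ℕ} (γ : ℝ) (hγ0 : 0 < γ) (hγ1 : γ < 1)
    (P Phat : Matrix (Fin d) (Fin d) ℝ)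
    (hP : RowStochastic P) (hPhat : RowStochastic Phat)
    (ρ : Fin d → ℝ) (hρpos : ∀ x, 0 < ρ x) (hρsum : ∑ x, ρ x = 1)
    (habs : ∀ x y, Phat x y ≠ P x y → 0 < Phat x y)
    (v : Fin d → ℝ) :
    norm4 ρ (((1 - γ • Phat)⁻¹ * (γ • (P - Phat))).mulVec v) ≤
      γ / (1 - γ) * Real.sqrt (Real.sqrt (Csq γ Phat ρ) * chiSq ρ P Phat) *
        norm4 ρ v :=
  G_L4_bound_general γ hγ0 hγ1 P Phat hPhat ρ hρpos habs v
end
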